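/- Let I ⊆ R = K[t,x] be primary with independent variables t, and suppose {N_i} ⊆ W_R is a set of Noetherian operators for I involving only the differential variables ∂_x (not ∂_t). Then the images of the N_i in W_S, where S = K(t)[x], form a set of Noetherian operators for IS: for f ∈ S, f ∈ IS iff N_i • f ∈ √(IS) for all i. -/

import Mathlib

open MvPolynomial

/-- The differential operator `∂_x^α` on `A[x₁,…,x_m]`. -/
noncomputable def diffOp {A : Type*} [CommRing A] {m : ℕ} (α : Fin m →₀ ℕ) :
    Module.End A (MvPolynomial (Fin m) A) :=
  (List.ofFn (fun i : Fin m => ((pderiv i : Derivation A (MvPolynomial (Fin m) A)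
      (MvPolynomial (Fin m) A)).toLinearMap ^ (α i)))).prod

/-- The action `N • f = ∑ c_α (∂_x^α • f)` of a differential operator `N = ∑ c_α ∂_x^α`
involving only the `∂_x`-variables. -/
noncomputable def wAct {A : Type*} [CommRing A] {m : ℕ}
    (N : (Fin m →₀ ℕ) →₀ MvPolynomial (Fin m) A) (f : MvPolynomial (Fin m) A) :
    MvPolynomial (Fin m) A :=
  N.sum fun α c => c * diffOp α f

/-!
Since the `N_i` differentiate only in `x`, they are `K(t)`-linear: clearing denominators,
`f = g / u` with `g ∈ R` and `u ∈ K[t] \ {0}` gives `N_i • f = (N_i • g) / u`. As `I` is primary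
and meets `K[t]` only in `0`, both `I` and the prime `√I` are contracted from their extensions
to `S = U⁻¹R`, and `√(IS) = (√I) S`; so `f ∈ IS ↔ g ∈ I ↔ ∀ i, N_i • g ∈ √I ↔ ∀ i, N_i • f ∈ √(IS)`.
-/

section Operators

variable {A B : Type*} [CommRing A] [CommRing B] {m : ℕ}

lemma semiconj_map_pderiv (ψ : A →+* B) (i : Fin m) :
    Function.Semiconj (MvPolynomial.map ψ) (pderiv i) (pderiv i) :=
  fun _ => pderiv_map.symm

lemma semiconj_map_diffOp (ψ : A →+* B) (α : Fin m →₀ ℕ) :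
    Function.Semiconj (MvPolynomial.map ψ) (diffOp α) (diffOp α) := by
  unfold diffOp
  rw [List.ofFn_eq_map, List.ofFn_eq_map]
  induction List.finRange m with
  | nil => exact Function.Semiconj.id_right
  | cons i l ih =>
    simp only [List.map_cons, List.prod_cons, Module.End.coe_mul, Module.End.coe_pow]
    exact ((semiconj_map_pderiv ψ i).iterate_right _).comp_right ih

lemma map_wAct (ψ : A →+* B) (N : (Fin m →₀ ℕ) →₀ MvPolynomial (Fin m) A)
    (p : MvPolynomial (Fin m) A) :
    MvPolynomial.map ψ (wAct N p) =
      wAct (N.mapRange (MvPolynomial.map ψ) (map_zero _)) (MvPolynomial.map ψ p) := by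
  rw [wAct, wAct, Finsupp.sum_mapRange_index (fun _ => by simp), map_finsuppSum]
  exact Finsupp.sum_congr fun α _ => by rw [map_mul, semiconj_map_diffOp ψ α p]

lemma wAct_mul_C (N : (Fin m →₀ ℕ) →₀ MvPolynomial (Fin m) A) (p : MvPolynomial (Fin m) A)
    (a : A) : wAct N (p * C a) = wAct N p * C a := by
  rw [wAct, wAct, Finsupp.sum_mul]
  exact Finsupp.sum_congr fun α _ => by
    rw [mul_comm p, ← smul_eq_C_mul, map_smul, smul_eq_C_mul, mul_comm (C a), mul_assoc]

end Operators

def IsNoetherianOperators {A : Type*} [CommRing A] {m : ℕ} {ι : Type*}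
    (I : Ideal (MvPolynomial (Fin m) A)) (N : ι → (Fin m →₀ ℕ) →₀ MvPolynomial (Fin m) A) :
    Prop :=
  ∀ f, f ∈ I ↔ ∀ i, wAct (N i) f ∈ I.radical

section Localization

variable {R : Type*} [CommRing R] (M : Submonoid R) (L : Type*) [CommRing L] [Algebra R L]
  [IsLocalization M L] {σ : Type*} {I : Ideal (MvPolynomial σ R)}

attribute [local instance] algebraMvPolynomial

lemma comap_map_map_of_isPrimary (hI : I.IsPrimary) (hM : ∀ c ∈ M, C c ∉ I) :
    (I.map (map (algebraMap R L))).comap (map (algebraMap R L)) = I :=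
  IsLocalization.under_map_of_isPrimary_disjoint (M.map C) (MvPolynomial σ L) hI <|
    Set.disjoint_left.mpr <| by rintro _ ⟨c, hc, rfl⟩; exact hM c hc

lemma comap_map_radical_map_of_isPrimary (hI : I.IsPrimary) (hM : ∀ c ∈ M, C c ∉ I) :
    (I.map (map (algebraMap R L))).radical.comap (map (algebraMap R L)) = I.radical := by
  have hrad : ∀ c ∈ M, C c ∉ I.radical := fun c hc ⟨n, hn⟩ =>
    hM (c ^ n) (pow_mem hc n) (by rwa [map_pow])
  rw [← algebraMap_def, ← IsLocalization.map_radical (M.map C) (MvPolynomial σ L)]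
  exact comap_map_map_of_isPrimary M L (Ideal.isPrime_radical hI).isPrimary hrad

theorem IsNoetherianOperators.map_of_isLocalization {m : ℕ} {I : Ideal (MvPolynomial (Fin m) R)}
    (hI : I.IsPrimary) (hM : ∀ c ∈ M, C c ∉ I) {ι : Type*}
    {N : ι → (Fin m →₀ ℕ) →₀ MvPolynomial (Fin m) R} (hN : IsNoetherianOperators I N) :
    IsNoetherianOperators (I.map (map (algebraMap R L)))
      fun i => (N i).mapRange (map (algebraMap R L)) (map_zero _) := by
  intro f
  obtain ⟨⟨g, s⟩, hfg⟩ := IsLocalization.surj (M.map (C : R →+* MvPolynomial (Fin m) R)) f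
  obtain ⟨c, -, hc⟩ := s.2
  have hunit := IsLocalization.map_units (MvPolynomial (Fin m) L) s
  simp only [algebraMap_def, ← hc, map_C] at hfg hunit
  have hwAct : ∀ i, wAct (N i) g ∈ I.radical ↔ wAct ((N i).mapRange
      (map (algebraMap R L)) (map_zero _)) f ∈ (I.map (map (algebraMap R L))).radical := by
    intro i
    rw [← comap_map_radical_map_of_isPrimary M L hI hM, Ideal.mem_comap, map_wAct, ← hfg,
      wAct_mul_C, Ideal.mul_unit_mem_iff_mem _ hunit]
  calc f ∈ I.map (map (algebraMap R L))
      ↔ g ∈ I := by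
        rw [← Ideal.mul_unit_mem_iff_mem _ hunit, hfg, ← Ideal.mem_comap,
          comap_map_map_of_isPrimary M L hI hM]
    _ ↔ ∀ i, wAct (N i) g ∈ I.radical := hN g
    _ ↔ _ := forall_congr' hwAct

end Localization

theorem noetherian_operators_extend_general
    (K : Type*) [Field K] (d m : ℕ)
    (I : Ideal (MvPolynomial (Fin m) (MvPolynomial (Fin d) K)))
    (hprim : I.IsPrimary)
    (hinj : ∀ c : MvPolynomial (Fin d) K, MvPolynomial.C c ∈ I → c = 0)
    {ι : Type*}
    (N : ι → ((Fin m →₀ ℕ) →₀ MvPolynomial (Fin m) (MvPolynomial (Fin d) K)))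
    (hN : ∀ f : MvPolynomial (Fin m) (MvPolynomial (Fin d) K),
      f ∈ I ↔ ∀ i, wAct (N i) f ∈ I.radical) :
    ∀ f : MvPolynomial (Fin m) (FractionRing (MvPolynomial (Fin d) K)),
      f ∈ I.map (MvPolynomial.map
        (algebraMap (MvPolynomial (Fin d) K) (FractionRing (MvPolynomial (Fin d) K)))) ↔
      ∀ i, wAct ((N i).mapRange
          (MvPolynomial.map (algebraMap (MvPolynomial (Fin d) K)
            (FractionRing (MvPolynomial (Fin d) K))))
          (map_zero _)) f ∈
        (I.map (MvPolynomial.map (algebraMap (MvPolynomial (Fin d) K)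
          (FractionRing (MvPolynomial (Fin d) K))))).radical := by
  have hU : ∀ c ∈ nonZeroDivisors (MvPolynomial (Fin d) K), C c ∉ I :=
    fun c hc hcI => nonZeroDivisors.ne_zero hc (hinj c hcI)
  exact IsNoetherianOperators.map_of_isLocalization _ _ hprim hU hN

/-- Let `I ⊆ R = K[t,x]` be primary with independent variables `t`, and
suppose `{N_i} ⊆ W_R` is a set of Noetherian operators for `I` involving only the
differential variables `∂_x` (not `∂_t`). Then the images of the `N_i` in `W_S`, where
`S = K(t)[x]`, form a set of Noetherian operators for `IS`:
for `f ∈ S`, `f ∈ IS ⟺ ∀ i, N_i • f ∈ √(IS)`. -/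
theorem noetherian_operators_extend
    (K : Type*) [Field K] [CharZero K] (d m : ℕ)
    (I : Ideal (MvPolynomial (Fin m) (MvPolynomial (Fin d) K)))
    (hprim : I.IsPrimary)
    (hinj : ∀ c : MvPolynomial (Fin d) K, MvPolynomial.C c ∈ I → c = 0)
    (halg : ∀ j : Fin m, ∃ q : Polynomial (MvPolynomial (Fin d) K),
      q ≠ 0 ∧ Polynomial.eval₂ MvPolynomial.C (MvPolynomial.X j) q ∈ I)
    {ι : Type*}
    (N : ι → ((Fin m →₀ ℕ) →₀ MvPolynomial (Fin m) (MvPolynomial (Fin d) K)))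
    (hN : ∀ f : MvPolynomial (Fin m) (MvPolynomial (Fin d) K),
      f ∈ I ↔ ∀ i, wAct (N i) f ∈ I.radical) :
    ∀ f : MvPolynomial (Fin m) (FractionRing (MvPolynomial (Fin d) K)),
      f ∈ I.map (MvPolynomial.map
        (algebraMap (MvPolynomial (Fin d) K) (FractionRing (MvPolynomial (Fin d) K)))) ↔
      ∀ i, wAct ((N i).mapRange
          (MvPolynomial.map (algebraMap (MvPolynomial (Fin d) K)
            (FractionRing (MvPolynomial (Fin d) K))))
          (map_zero _)) f ∈
        (I.map (MvPolynomial.map (algebraMap (MvPolynomial (Fin d) K)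
          (FractionRing (MvPolynomial (Fin d) K))))).radical :=
  noetherian_operators_extend_general K d m I hprim hinj N hN
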